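/- The number of Dyck paths of semilength n whose bounce path is p_{n,α}, for a composition α of n with ℓ parts, is ∏_{j=2}^{ℓ} C(α_{j−1} + α_j − 1, α_j). -/

import Mathlib

/-- A Dyck path of semilength `n`, encoded as a list of steps
(`true` = north, `false` = east), staying weakly above the diagonal. -/
def IsDyck (n : ℕ) (w : List Bool) : Prop :=
  w.length = 2 * n ∧ w.count true = n ∧
    ∀ k, (w.take k).count false ≤ (w.take k).count true

/-- The area of a Dyck path: the number of whole unit cells between the
path and the diagonal (on each north step, the current number of east
steps is subtracted from the current number of north steps). -/
def area (w : List Bool) : ℕ :=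
  (w.foldl
    (fun (p : ℕ × ℕ × ℕ) s =>
      if s then (p.1 + (p.2.1 - p.2.2), p.2.1 + 1, p.2.2)
      else (p.1, p.2.1, p.2.2 + 1)) (0, 0, 0)).1

/-- `hgt w b` is the number of north steps of `w` preceding its `(b+1)`-st
east step, i.e. the height at which the bounce path heading north along
the line `x = b` meets an east step of `w`. -/
def hgt : List Bool → ℕ → ℕ
  | [], _ => 0
  | true :: w, b => hgt w b + 1
  | false :: _, 0 => 0
  | false :: w, b + 1 => hgt w b

/-- The `i`-th bounce point (a height on the diagonal) of a Dyck path. -/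
def bpt (w : List Bool) (i : ℕ) : ℕ := (hgt w)^[i] 0

/-- The bounce statistic of a Dyck path of semilength `n`:
`∑ (n - b_i)` over the successive bounce points `b_i`, `i ≥ 1`
(once the bounce path reaches `n` the terms vanish). -/
def bounce (n : ℕ) (w : List Bool) : ℕ :=
  ∑ i ∈ Finset.range n, (n - bpt w (i + 1))

/-- The Dyck path `N^{α₁}E^{α₁} ⋯ N^{α_ℓ}E^{α_ℓ}` of a composition `α`. -/
def pComp (α : List ℕ) : List Bool :=
  α.foldr (fun a acc => List.replicate a true ++ List.replicate a false ++ acc) []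



def tl : ℕ → List Bool → List ℕ
  | _, [] => []
  | c, true :: w => tl (c+1) w
  | c, false :: w => c :: tl c w

def wd (m : ℕ) : ℕ → List ℕ → List Bool
  | c, [] => List.replicate (m - c) true
  | c, a :: t => List.replicate (a - c) true ++ false :: wd m a t

theorem count_tf (w : List Bool) : w.count true + w.count false = w.length := by
  induction w with
  | nil => simp
  | cons b w ih => cases b <;> simp [List.count_cons] <;> omega

theorem tl_length (c : ℕ) (w : List Bool) : (tl c w).length = w.count false := by
  induction w generalizing c with
  | nil => simp [tl]
  | cons b w ih => cases b <;> simp [tl, ih, List.count_cons]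

theorem tl_ge (c : ℕ) (w : List Bool) : ∀ x ∈ tl c w, c ≤ x := by
  induction w generalizing c with
  | nil => simp [tl]
  | cons b w ih =>
    cases b
    · intro x hx
      simp only [tl, List.mem_cons] at hx
      rcases hx with rfl | hx
      · exact le_refl _
      · exact ih c x hx
    · intro x hx
      exact le_trans (Nat.le_succ c) (ih (c+1) x hx)

theorem tl_le (c : ℕ) (w : List Bool) : ∀ x ∈ tl c w, x ≤ c + w.count true := by
  induction w generalizing c with
  | nil => simp [tl]
  | cons b w ih =>
    cases b
    · intro x hx
      simp only [tl, List.mem_cons] at hx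
      simp only [List.count_cons]
      rcases hx with rfl | hx
      · omega
      · have := ih c x hx; simp; omega
    · intro x hx
      have := ih (c+1) x hx
      simp only [List.count_cons]
      norm_num
      omega

theorem tl_sorted (c : ℕ) (w : List Bool) : (tl c w).Pairwise (· ≤ ·) := by
  induction w generalizing c with
  | nil => simp [tl]
  | cons b w ih =>
    cases b
    · exact List.pairwise_cons.2 ⟨tl_ge c w, ih c⟩
    · exact ih (c+1)

theorem hgt_tl (w : List Bool) (c b : ℕ) :
    hgt w b + c = (tl c w).getD b (c + w.count true) := by
  induction w generalizing c b with
  | nil => simp [tl, hgt]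
  | cons s w ih =>
    cases s
    · cases b with
      | zero => simp [tl, hgt]
      | succ b =>
        simp only [tl, hgt, List.getD_cons_succ, List.count_cons, cond_false]
        have := ih c b
        simpa using this
    · simp only [tl, hgt, List.count_cons, cond_true]
      have := ih (c+1) b
      rw [show c + (w.count true + if (true == true) = true then 1 else 0) = c + 1 + w.count true by norm_num; omega]
      omega


theorem wd_cons_true (m c : ℕ) (t : List ℕ)
    (h0 : t = [] → c < m) (h1 : ∀ a t', t = a :: t' → c < a) :
    wd m c t = true :: wd m (c+1) t := by
  cases t with
  | nil =>
    have := h0 rfl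
    simp only [wd]
    rw [show m - c = (m - (c+1)) + 1 by omega, List.replicate_succ]
  | cons a t' =>
    have := h1 a t' rfl
    simp only [wd]
    rw [show a - c = (a - (c+1)) + 1 by omega, List.replicate_succ]
    simp

theorem wd_tl (w : List Bool) (c : ℕ) : wd (c + w.count true) c (tl c w) = w := by
  induction w generalizing c with
  | nil => simp [tl, wd]
  | cons s w ih =>
    cases s
    · simp only [tl, List.count_cons, cond_false, wd]
      norm_num
      simpa [wd] using ih c
    · simp only [tl, List.count_cons, cond_true]
      norm_num
      rw [show c + (w.count true + 1) = (c+1) + w.count true by omega]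
      rw [wd_cons_true]
      · rw [ih (c+1)]
      · intro h
        omega
      · intro a t' h
        have : a ∈ tl (c+1) w := by rw [h]; simp
        have := tl_ge (c+1) w a this
        omega

theorem tl_replicate_append (k c : ℕ) (v : List Bool) :
    tl c (List.replicate k true ++ v) = tl (c + k) v := by
  induction k generalizing c with
  | zero => simp
  | succ k ih =>
    rw [List.replicate_succ]
    show tl c (true :: (List.replicate k true ++ v)) = _
    simp only [tl]
    rw [ih (c+1)]
    congr 1
    omega

theorem tl_wd : ∀ (t : List ℕ) (c m : ℕ), t.Pairwise (· ≤ ·) →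
    (∀ x ∈ t, c ≤ x ∧ x ≤ m) → tl c (wd m c t) = t := by
  intro t
  induction t with
  | nil =>
    intro c m _ _
    simp only [wd]
    have := tl_replicate_append (m - c) c []
    simpa [tl] using this
  | cons a t' ih =>
    intro c m hs hb
    have ha := hb a (by simp)
    simp only [wd]
    rw [tl_replicate_append]
    rw [show c + (a - c) = a by omega]
    simp only [tl]
    congr 1
    refine ih a m (List.pairwise_cons.1 hs).2 ?_
    intro x hx
    exact ⟨(List.pairwise_cons.1 hs).1 x hx, (hb x (by simp [hx])).2⟩

theorem wd_count_false (m c : ℕ) (t : List ℕ) : (wd m c t).count false = t.length := by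
  induction t generalizing c with
  | nil => simp [wd, List.count_replicate]
  | cons a t' ih => simp [wd, ih a, List.count_replicate]

theorem wd_count_true : ∀ (t : List ℕ) (c m : ℕ), t.Pairwise (· ≤ ·) →
    (∀ x ∈ t, c ≤ x ∧ x ≤ m) → (wd m c t).count true = m - c := by
  intro t
  induction t with
  | nil => intro c m _ _; simp [wd, List.count_replicate]
  | cons a t' ih =>
    intro c m hs hb
    have ha := hb a (by simp)
    have h2 : (wd m a t').count true = m - a := by
      refine ih a m (List.pairwise_cons.1 hs).2 ?_
      intro x hx
      exact ⟨(List.pairwise_cons.1 hs).1 x hx, (hb x (by simp [hx])).2⟩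
    simp [wd, h2, List.count_replicate]
    omega


def Qc (c : ℕ) (w : List Bool) : Prop :=
  ∀ k, (w.take k).count false ≤ (w.take k).count true + c

theorem Qc_nil (c : ℕ) : Qc c [] := by intro k; simp

theorem Qc_true {c : ℕ} {w : List Bool} (h : Qc (c+1) w) : Qc c (true :: w) := by
  intro k
  cases k with
  | zero => simp
  | succ k =>
    have := h k
    simp only [List.take_succ_cons, List.count_cons]
    norm_num
    omega

theorem Qc_false {c : ℕ} {w : List Bool} (h : Qc c w) : Qc (c+1) (false :: w) := by
  intro k
  cases k with
  | zero => simp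
  | succ k =>
    have := h k
    simp only [List.take_succ_cons, List.count_cons]
    norm_num
    omega

theorem Qc_replicate_append {c k : ℕ} {w : List Bool} (h : Qc (c+k) w) :
    Qc c (List.replicate k true ++ w) := by
  induction k generalizing c with
  | zero => simpa using h
  | succ k ih =>
    rw [List.replicate_succ]
    show Qc c (true :: (List.replicate k true ++ w))
    refine Qc_true (ih ?_)
    rw [show c + 1 + k = c + (k+1) by omega]
    exact h

theorem Qc_wd : ∀ (t : List ℕ) (c d m : ℕ), d ≤ c → t.Pairwise (· ≤ ·) →
    (∀ x ∈ t, c ≤ x) →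
    (∀ j (h : j < t.length), d + j + 1 ≤ t.get ⟨j, h⟩) →
    Qc (c - d) (wd m c t) := by
  intro t
  induction t with
  | nil =>
    intro c d m _ _ _ _
    simp only [wd]
    have : Qc (c-d) (List.replicate (m-c) true ++ []) := Qc_replicate_append (Qc_nil _)
    simpa using this
  | cons a t' ih =>
    intro c d m hdc hs hc hget
    have hca : c ≤ a := hc a (by simp)
    have hda : d + 1 ≤ a := by
      have := hget 0 (by simp)
      simpa using this
    simp only [wd]
    refine Qc_replicate_append ?_
    rw [show c - d + (a - c) = (a - (d+1)) + 1 by omega]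
    refine Qc_false ?_
    refine ih a (d+1) m hda (List.pairwise_cons.1 hs).2 (List.pairwise_cons.1 hs).1 ?_
    intro j hj
    have := hget (j+1) (by simpa using Nat.succ_lt_succ hj)
    simp at this ⊢
    omega


def Sl (m lo v : ℕ) : Set (List ℕ) :=
  {l | l.length = m ∧ l.Pairwise (· ≤ ·) ∧ ∀ x ∈ l, lo ≤ x ∧ x < lo + v}

def Tset (c : ℕ) (α : List ℕ) : Set (List ℕ) :=
  {t | t.length = α.sum ∧ t.Pairwise (· ≤ ·) ∧ (∀ x ∈ t, x ≤ c + α.sum) ∧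
    ∀ i < α.length, t.getD ((α.take i).sum) (c + α.sum) = c + (α.take (i+1)).sum}

theorem getD_irrel {l : List ℕ} {j : ℕ} (h : j < l.length) (d d' : ℕ) :
    l.getD j d = l.getD j d' := by
  rw [List.getD_eq_getElem l d h, List.getD_eq_getElem l d' h]

theorem take_sum_lt {α : List ℕ} (hpos : ∀ x ∈ α, 0 < x) {i : ℕ} (hi : i < α.length) :
    (α.take i).sum < α.sum := by
  conv_rhs => rw [← List.take_append_drop i α]
  rw [List.sum_append]
  have hne : α.drop i ≠ [] := by
    intro h
    have := (List.length_drop : (α.drop i).length = α.length - i)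
    rw [h] at this
    simp at this
    omega
  have : 0 < (α.drop i).sum := by
    refine List.sum_pos _ (fun x hx => hpos x (List.mem_of_mem_drop hx)) hne
  omega

theorem Tset_nil (c : ℕ) : Tset c [] = {[]} := by
  ext t
  simp only [Tset, Set.mem_setOf_eq, Set.mem_singleton_iff, List.sum_nil]
  constructor
  · rintro ⟨h, -, -, -⟩; exact List.length_eq_zero_iff.1 h
  · rintro rfl; simp

theorem Tset_single (c a : ℕ) (ha : 0 < a) : Tset c [a] = {List.replicate a (c + a)} := by
  ext t
  simp only [Tset, Set.mem_setOf_eq, Set.mem_singleton_iff, List.sum_cons, List.sum_nil,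
    List.length_cons, List.length_nil]
  constructor
  · rintro ⟨h1, h2, h3, h4⟩
    have h0 := h4 0 (by omega)
    simp only [List.take_zero, List.sum_nil] at h0
    rw [List.take_succ_cons] at h0
    simp only [List.take_zero, List.sum_cons, List.sum_nil] at h0
    cases t with
    | nil => simp at h1; omega
    | cons x t' =>
      simp only [List.getD_cons_zero] at h0
      refine List.eq_replicate_iff.2 ⟨by simpa using h1, ?_⟩
      intro y hy
      have hub := h3 y hy
      rcases List.mem_cons.1 hy with rfl | hy'
      · omega
      · have := (List.pairwise_cons.1 h2).1 y hy'
        omega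
  · rintro rfl
    refine ⟨by simp, ?_, ?_, ?_⟩
    · exact List.pairwise_replicate.2 (Or.inr (le_refl _))
    · intro x hx
      rw [List.eq_of_mem_replicate hx]
      omega
    · intro i hi
      interval_cases i
      simp only [List.take_zero, List.sum_nil, List.take_succ_cons, List.sum_cons]
      rw [List.getD_eq_getElem _ _ (by simp; omega)]
      simp [List.getElem_replicate]

theorem Tset_step (c a b : ℕ) (γ : List ℕ) (ha : 0 < a) (hb : 0 < b)
    (hγ : ∀ x ∈ γ, 0 < x) :
    Tset c (a :: b :: γ) =
      (fun p : List ℕ × List ℕ => p.1 ++ p.2) ''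
        ((List.cons (c+a) '' Sl (a-1) (c+a) (b+1)) ×ˢ Tset (c+a) (b :: γ)) := by
  have hposbγ : ∀ x ∈ b :: γ, 0 < x := by
    intro x hx; rcases List.mem_cons.1 hx with rfl | h; exact hb; exact hγ x h
  ext t
  constructor
  · rintro ⟨C0, C1, C2, C3⟩
    simp only [List.sum_cons] at C0 C2 C3
    have h0 : t.getD 0 (c + (a + (b + γ.sum))) = c + a := by
      have := C3 0 (by simp)
      simpa using this
    have h1 : t.getD a (c + (a + (b + γ.sum))) = c + (a + b) := by
      have := C3 1 (by simp)
      simpa using this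
    have htuv : t.take a ++ t.drop a = t := List.take_append_drop a t
    have hul : (t.take a).length = a := by rw [List.length_take]; omega
    have hvl : (t.drop a).length = b + γ.sum := by rw [List.length_drop]; omega
    have hsplit := C1
    rw [← htuv] at hsplit
    obtain ⟨su, sv, huv⟩ := List.pairwise_append.1 hsplit
    -- head of v
    have hv0 : (t.drop a).getD 0 (c + (a + (b + γ.sum))) = c + (a + b) := by
      rw [← htuv, List.getD_append_right _ _ _ _ (by omega)] at h1
      rwa [show a - (t.take a).length = 0 by omega] at h1
    -- decompose u and v
    obtain ⟨u₀, u'', hu⟩ : ∃ x l, t.take a = x :: l := by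
      cases htk : t.take a with
      | nil => rw [htk] at hul; simp at hul; omega
      | cons x l => exact ⟨x, l, rfl⟩
    obtain ⟨v₀, v'', hv⟩ : ∃ x l, t.drop a = x :: l := by
      cases htk : t.drop a with
      | nil => rw [htk] at hvl; simp at hvl; omega
      | cons x l => exact ⟨x, l, rfl⟩
    have hu₀ : u₀ = c + a := by
      rw [← htuv, List.getD_append _ _ _ _ (by rw [hu]; simp)] at h0
      rw [hu] at h0
      simpa using h0
    have hv₀ : v₀ = c + (a + b) := by rw [hv] at hv0; simpa using hv0
    refine ⟨⟨t.take a, t.drop a⟩, ⟨⟨u'', ⟨?_, ?_, ?_⟩, ?_⟩, ?_, ?_, ?_, ?_⟩, htuv⟩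
    · rw [hu] at hul; simp at hul; omega
    · rw [hu] at su; exact (List.pairwise_cons.1 su).2
    · intro x hx
      constructor
      · rw [hu] at su
        have := (List.pairwise_cons.1 su).1 x hx
        omega
      · have hxu : x ∈ t.take a := by rw [hu]; exact List.mem_cons_of_mem _ hx
        have hyv : v₀ ∈ t.drop a := by rw [hv]; simp
        have := huv x hxu v₀ hyv
        omega
    · rw [hu, hu₀]
    · simp only [List.sum_cons]; omega
    · exact sv
    · intro x hx
      have : x ∈ t := by rw [← htuv]; exact List.mem_append_right _ hx
      have := C2 x this
      simp only [List.sum_cons]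
      omega
    · intro i hi
      dsimp only
      simp only [List.length_cons] at hi
      have hj : ((( b :: γ).take i)).sum < b + γ.sum := by
        have := take_sum_lt hposbγ (by simpa using hi : i < (b :: γ).length)
        simpa using this
      have hC := C3 (i + 1) (by simp; omega)
      rw [List.take_succ_cons, List.sum_cons] at hC
      rw [show (a :: b :: γ).take (i + 1 + 1) = a :: ((b :: γ).take (i+1)) from rfl] at hC
      rw [List.sum_cons] at hC
      rw [← htuv, List.getD_append_right _ _ _ _ (by omega)] at hC
      rw [show a + ((b :: γ).take i).sum - (t.take a).length = ((b :: γ).take i).sum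
        by omega] at hC
      rw [getD_irrel (by omega) _ (c + (a + (b + γ.sum)))]
      omega
  · rintro ⟨⟨u, v⟩, ⟨⟨u', ⟨hul', su', hb'⟩, rfl⟩, V0, V1, V2, V3⟩, rfl⟩
    simp only [List.sum_cons] at V0 V2 V3
    simp only [Tset, Set.mem_setOf_eq, List.sum_cons]
    obtain ⟨v₀, v'', hv⟩ : ∃ x l, v = x :: l := by
      cases v with
      | nil => simp at V0; omega
      | cons x l => exact ⟨x, l, rfl⟩
    have hv₀ : v₀ = c + a + b := by
      have := V3 0 (by simp)
      rw [hv] at this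
      simpa using this
    have hvge : ∀ y ∈ v, c + a + b ≤ y := by
      intro y hy
      rw [hv] at hy V1
      rcases List.mem_cons.1 hy with rfl | hy'
      · omega
      · have := (List.pairwise_cons.1 V1).1 y hy'
        omega
    have hulen : ((c + a) :: u').length = a := by simp; omega
    refine ⟨?_, ?_, ?_, ?_⟩
    · simp only [List.length_append, List.length_cons]
      omega
    · refine List.pairwise_append.2 ⟨?_, V1, ?_⟩
      · refine List.pairwise_cons.2 ⟨fun y hy => (hb' y hy).1, su'⟩
      · intro x hx y hy
        have hy' := hvge y hy
        rcases List.mem_cons.1 hx with rfl | hx'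
        · omega
        · have := (hb' x hx').2
          omega
    · intro x hx
      rcases List.mem_append.1 hx with hx' | hx'
      · rcases List.mem_cons.1 hx' with rfl | hx''
        · omega
        · have := (hb' x hx'').2
          omega
      · have := V2 x hx'
        omega
    · intro i hi
      simp only [List.length_cons] at hi
      match i, hi with
      | 0, _ =>
        simp only [List.take_zero, List.sum_nil, List.take_succ_cons, List.sum_cons]
        rw [List.getD_append _ _ _ _ (by rw [hulen]; omega)]
        simp
      | 1, _ =>
        simp only [List.take_succ_cons, List.take_zero, List.sum_cons, List.sum_nil]
        rw [List.getD_append_right _ _ _ _ (by rw [hulen]; simp)]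
        rw [show a + 0 - ((c + a) :: u').length = 0 by rw [hulen]; omega]
        rw [getD_irrel (by rw [hv]; simp) _ (c + a + (b + γ.sum))]
        have := V3 0 (by simp)
        simp only [List.take_zero, List.sum_nil, List.take_succ_cons, List.sum_cons] at this ⊢
        omega
      | (i' + 2), _ =>
        have hi' : i' < γ.length := by omega
        have hj : ((b :: γ).take (i' + 1)).sum < b + γ.sum := by
          have := take_sum_lt hposbγ (by simp; omega : i' + 1 < (b :: γ).length)
          simpa using this
        rw [show (a :: b :: γ).take (i' + 2) = a :: ((b :: γ).take (i' + 1)) from rfl]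
        rw [show (a :: b :: γ).take (i' + 2 + 1) = a :: ((b :: γ).take (i' + 2)) from rfl]
        simp only [List.sum_cons]
        rw [List.getD_append_right _ _ _ _ (by rw [hulen]; omega)]
        rw [show a + ((b :: γ).take (i' + 1)).sum - ((c + a) :: u').length
            = ((b :: γ).take (i' + 1)).sum by rw [hulen]; omega]
        rw [getD_irrel (by rw [V0]; omega) _ (c + a + (b + γ.sum))]
        have := V3 (i' + 1) (by simp; omega)
        simp only [List.take_succ_cons, List.sum_cons] at this ⊢
        omega

theorem ncard_prod' {A B : Type*} (s : Set A) (t : Set B) :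
    (s ×ˢ t).ncard = s.ncard * t.ncard := by
  rw [← Nat.card_coe_set_eq, ← Nat.card_coe_set_eq, ← Nat.card_coe_set_eq,
    Nat.card_congr (Equiv.Set.prod s t), Nat.card_prod]

theorem list_finite (m N : ℕ) : {l : List ℕ | l.length = m ∧ ∀ x ∈ l, x < N}.Finite := by
  induction m with
  | zero =>
    refine Set.Finite.subset (Set.finite_singleton []) ?_
    intro l hl
    simp only [Set.mem_setOf_eq] at hl
    simp [List.length_eq_zero_iff.1 hl.1]
  | succ m ih =>
    refine Set.Finite.subset (Set.Finite.image2 List.cons (Set.finite_Iio N) ih) ?_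
    rintro l ⟨hlen, hmem⟩
    cases l with
    | nil => simp at hlen
    | cons x l' =>
      refine Set.mem_image2_of_mem ?_ ?_
      · exact hmem x (by simp)
      · exact ⟨by simpa using hlen, fun y hy => hmem y (by simp [hy])⟩

theorem Sl_finite (m lo v : ℕ) : (Sl m lo v).Finite := by
  refine Set.Finite.subset (list_finite m (lo + v)) ?_
  rintro l ⟨h1, _, h3⟩
  exact ⟨h1, fun x hx => (h3 x hx).2⟩

theorem Tset_finite (c : ℕ) (α : List ℕ) : (Tset c α).Finite := by
  refine Set.Finite.subset (list_finite α.sum (c + α.sum + 1)) ?_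
  rintro t ⟨h1, _, h3, _⟩
  exact ⟨h1, fun x hx => by have := h3 x hx; omega⟩

theorem Sl_card (m : ℕ) : ∀ (v lo : ℕ), (Sl m lo v).ncard = Nat.multichoose v m := by
  induction m with
  | zero =>
    intro v lo
    have : Sl 0 lo v = {[]} := by
      ext l
      simp only [Sl, Set.mem_setOf_eq, Set.mem_singleton_iff]
      constructor
      · rintro ⟨h, -, -⟩; exact List.length_eq_zero_iff.1 h
      · rintro rfl; simp
    rw [this]
    simp [Nat.multichoose_zero_right]
  | succ m ihm =>
    intro v
    induction v with
    | zero =>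
      intro lo
      have : Sl (m+1) lo 0 = ∅ := by
        ext l
        simp only [Sl, Set.mem_setOf_eq, Set.mem_empty_iff_false, iff_false]
        rintro ⟨h1, -, h3⟩
        cases l with
        | nil => simp at h1
        | cons x l' => have := h3 x (by simp); omega
      rw [this]
      simp [Nat.multichoose]
    | succ v ihv =>
      intro lo
      have hsplit : Sl (m+1) lo (v+1) =
          (List.cons lo '' Sl m lo (v+1)) ∪ Sl (m+1) (lo+1) v := by
        ext l
        constructor
        · rintro ⟨h1, h2, h3⟩
          cases l with
          | nil => simp at h1
          | cons x l' =>
            rcases Nat.eq_or_lt_of_le (h3 x (by simp)).1 with heq | hlt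
            · left
              refine ⟨l', ⟨by simpa using h1, (List.pairwise_cons.1 h2).2,
                fun y hy => ⟨?_, (h3 y (by simp [hy])).2⟩⟩, by rw [heq]⟩
              exact le_trans (le_of_eq heq) ((List.pairwise_cons.1 h2).1 y hy)
            · right
              refine ⟨h1, h2, fun y hy => ⟨?_, ?_⟩⟩
              · rcases List.mem_cons.1 hy with rfl | hy'
                · omega
                · exact le_trans hlt ((List.pairwise_cons.1 h2).1 y hy')
              · have := (h3 y hy).2; omega
        · rintro (⟨l', ⟨h1, h2, h3⟩, rfl⟩ | ⟨h1, h2, h3⟩)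
          · refine ⟨by simpa using h1, List.pairwise_cons.2 ⟨fun y hy => (h3 y hy).1, h2⟩,
              fun y hy => ?_⟩
            rcases List.mem_cons.1 hy with rfl | hy'
            · omega
            · have := h3 y hy'; omega
          · exact ⟨h1, h2, fun y hy => by have := h3 y hy; omega⟩
      have hdisj : Disjoint (List.cons lo '' Sl m lo (v+1)) (Sl (m+1) (lo+1) v) := by
        rw [Set.disjoint_left]
        rintro l ⟨l', -, rfl⟩ ⟨-, -, h3⟩
        have := (h3 lo (by simp)).1
        omega
      rw [hsplit, Set.ncard_union_eq hdisj
          (Set.Finite.image _ (Sl_finite m lo (v+1))) (Sl_finite (m+1) (lo+1) v)]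
      rw [Set.ncard_image_of_injective _ (fun a b h => by injection h)]
      rw [ihm (v+1) lo, ihv (lo+1)]
      rw [Nat.multichoose_succ_succ]
      omega

theorem Tcount : ∀ (α : List ℕ) (c : ℕ), (∀ x ∈ α, 0 < x) →
    (Tset c α).ncard = ∏ j ∈ Finset.range (α.length - 1),
      (α.getD j 0 + α.getD (j + 1) 0 - 1).choose (α.getD (j + 1) 0) := by
  intro α
  induction α with
  | nil => intro c _; simp [Tset_nil]
  | cons a β ih =>
    intro c hpos
    have ha : 0 < a := hpos a (by simp)
    cases β with
    | nil => simp [Tset_single c a ha]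
    | cons b γ =>
      have hb : 0 < b := hpos b (by simp)
      have hγ : ∀ x ∈ γ, 0 < x := fun x hx => hpos x (by simp [hx])
      rw [Tset_step c a b γ ha hb hγ]
      rw [Set.ncard_image_of_injOn ?inj]
      case inj =>
        rintro ⟨u₁, v₁⟩ ⟨hu₁, hv₁⟩ ⟨u₂, v₂⟩ ⟨hu₂, hv₂⟩ h
        simp only at h hu₁ hu₂ hv₁ hv₂
        obtain ⟨u₁', hu₁', rfl⟩ := hu₁
        obtain ⟨u₂', hu₂', rfl⟩ := hu₂
        have hlen : ((c+a) :: u₁').length = ((c+a) :: u₂').length := by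
          simp only [List.length_cons, hu₁'.1, hu₂'.1]
        obtain ⟨h1, h2⟩ := List.append_inj h hlen
        simp [h1, h2]
      rw [ncard_prod']
      rw [Set.ncard_image_of_injective _ (fun x y h => by injection h)]
      rw [Sl_card, ih (c + a) (fun x hx => hpos x (by simp [hx]))]
      rw [Nat.multichoose_eq]
      have hlen : (a :: b :: γ).length - 1 = γ.length + 1 := by simp
      rw [hlen, Finset.prod_range_succ']
      have h1 : ∏ j ∈ Finset.range ((b :: γ).length - 1),
          ((b :: γ).getD j 0 + (b :: γ).getD (j + 1) 0 - 1).choose ((b :: γ).getD (j + 1) 0)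
          = ∏ j ∈ Finset.range γ.length,
          ((a :: b :: γ).getD (j + 1) 0 + (a :: b :: γ).getD (j + 1 + 1) 0 - 1).choose
            ((a :: b :: γ).getD (j + 1 + 1) 0) := by
        refine Finset.prod_congr (by simp) (fun j _ => by simp [List.getD_cons_succ])
      have h2 : (b + 1 + (a - 1) - 1).choose (a - 1)
          = ((a :: b :: γ).getD 0 0 + (a :: b :: γ).getD (0 + 1) 0 - 1).choose
            ((a :: b :: γ).getD (0 + 1) 0) := by
        simp only [List.getD_cons_zero, List.getD_cons_succ]
        rw [show b + 1 + (a - 1) - 1 = a + b - 1 by omega]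
        rw [← Nat.choose_symm (by omega : a - 1 ≤ a + b - 1)]
        congr 1
        omega
      rw [h1, h2, mul_comm]

-- GLUE

theorem exists_block : ∀ (α : List ℕ), (∀ x ∈ α, 0 < x) → ∀ j < α.sum,
    ∃ i < α.length, (α.take i).sum ≤ j ∧ j < (α.take (i + 1)).sum := by
  intro α
  induction α with
  | nil => intro _ j hj; simp at hj
  | cons a β ih =>
    intro hpos j hj
    by_cases hja : j < a
    · exact ⟨0, by simp, by simp, by simpa using hja⟩
    · have hj' : j - a < β.sum := by simp at hj; omega
      obtain ⟨i, hi, h1, h2⟩ := ih (fun x hx => hpos x (by simp [hx])) (j - a) hj'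
      refine ⟨i + 1, by simpa using Nat.succ_lt_succ hi, ?_, ?_⟩
      · simp only [List.take_succ_cons, List.sum_cons]; omega
      · simp only [List.take_succ_cons, List.sum_cons]; omega

theorem main_set_eq (α : List ℕ) (hpos : ∀ x ∈ α, 0 < x) :
    {w : List Bool | IsDyck α.sum w ∧
        ∀ i ≤ α.length, bpt w i = (α.take i).sum} = wd α.sum 0 '' Tset 0 α := by
  ext w
  constructor
  · rintro ⟨⟨hlen, hct, hpre⟩, hbpt⟩
    have hcf : w.count false = α.sum := by have := count_tf w; omega
    have htl : (tl 0 w).length = α.sum := by rw [tl_length]; exact hcf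
    have hgt_eq : ∀ b, hgt w b = (tl 0 w).getD b (0 + α.sum) := by
      intro b
      have := hgt_tl w 0 b
      rw [hct] at this
      omega
    refine ⟨tl 0 w, ⟨htl, tl_sorted 0 w, ?_, ?_⟩, ?_⟩
    · intro x hx
      have := tl_le 0 w x hx
      omega
    · intro i hi
      rw [← hgt_eq ((α.take i).sum)]
      have h1 : bpt w i = (α.take i).sum := hbpt i (le_of_lt hi)
      have h2 : bpt w (i + 1) = (α.take (i + 1)).sum := hbpt (i + 1) hi
      rw [bpt, Function.iterate_succ_apply'] at h2
      rw [← bpt, h1] at h2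
      omega
    · have := wd_tl w 0
      rw [hct] at this
      simpa using this
  · rintro ⟨t, ⟨htl, hsort, hbd, hcond⟩, rfl⟩
    have hbd' : ∀ x ∈ t, 0 ≤ x ∧ x ≤ α.sum := fun x hx => ⟨Nat.zero_le _, by
      have := hbd x hx; omega⟩
    have hct : (wd α.sum 0 t).count true = α.sum := by
      have := wd_count_true t 0 α.sum hsort hbd'
      omega
    have hcf : (wd α.sum 0 t).count false = α.sum := by
      rw [wd_count_false, htl]
    have hget : ∀ j (h : j < t.length), 0 + j + 1 ≤ t.get ⟨j, h⟩ := by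
      intro j hj
      obtain ⟨i, hi, h1, h2⟩ := exists_block α hpos j (by omega)
      have hsi : (α.take i).sum < t.length := by
        rw [htl]; exact take_sum_lt hpos hi
      have hv : t.get ⟨(α.take i).sum, hsi⟩ = (α.take (i + 1)).sum := by
        have := hcond i hi
        rw [List.getD_eq_getElem _ _ hsi] at this
        simp only [List.get_eq_getElem]
        omega
      have := List.Pairwise.rel_get_of_le hsort
        (show (⟨(α.take i).sum, hsi⟩ : Fin t.length) ≤ ⟨j, hj⟩ from h1)
      omega
    have hpre : ∀ k, ((wd α.sum 0 t).take k).count false ≤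
        ((wd α.sum 0 t).take k).count true := by
      have := Qc_wd t 0 0 α.sum (le_refl 0) hsort (fun x hx => (hbd' x hx).1) hget
      intro k
      have := this k
      omega
    have htlwd : tl 0 (wd α.sum 0 t) = t := tl_wd t 0 α.sum hsort hbd'
    refine ⟨⟨?_, hct, hpre⟩, ?_⟩
    · have := count_tf (wd α.sum 0 t)
      omega
    · have hgt_eq : ∀ b, hgt (wd α.sum 0 t) b = t.getD b (0 + α.sum) := by
        intro b
        have := hgt_tl (wd α.sum 0 t) 0 b
        rw [hct, htlwd] at this
        omega
      intro i
      induction i with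
      | zero => intro _; simp [bpt]
      | succ i ihh =>
        intro hi
        rw [bpt, Function.iterate_succ_apply', ← bpt]
        rw [ihh (by omega), hgt_eq]
        have := hcond i (by omega)
        omega

theorem main_count (α : List ℕ) (hpos : ∀ x ∈ α, 0 < x) :
    {w : List Bool | IsDyck α.sum w ∧
        ∀ i ≤ α.length, bpt w i = (α.take i).sum}.ncard =
      ∏ j ∈ Finset.range (α.length - 1),
        (α.getD j 0 + α.getD (j + 1) 0 - 1).choose (α.getD (j + 1) 0) := by
  rw [main_set_eq α hpos]
  rw [Set.ncard_image_of_injOn ?inj]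
  case inj =>
    intro t₁ h₁ t₂ h₂ h
    have e₁ : tl 0 (wd α.sum 0 t₁) = t₁ :=
      tl_wd t₁ 0 α.sum h₁.2.1 (fun x hx => ⟨Nat.zero_le _, by have := h₁.2.2.1 x hx; omega⟩)
    have e₂ : tl 0 (wd α.sum 0 t₂) = t₂ :=
      tl_wd t₂ 0 α.sum h₂.2.1 (fun x hx => ⟨Nat.zero_le _, by have := h₂.2.2.1 x hx; omega⟩)
    rw [← e₁, ← e₂, h]
  exact Tcount α 0 hpos

theorem stmt16 (n : ℕ) (α : List ℕ) (hpos : ∀ x ∈ α, 0 < x) (hsum : α.sum = n) :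
    {w : List Bool | IsDyck n w ∧
        ∀ i ≤ α.length, bpt w i = (α.take i).sum}.ncard =
      ∏ j ∈ Finset.range (α.length - 1),
        (α.getD j 0 + α.getD (j + 1) 0 - 1).choose (α.getD (j + 1) 0) := by
  subst hsum
  exact main_count α hpos
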